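/- arXiv:1611.08139 — 6 statements merged into one kernel-verified Lean document; each statement's English description precedes it below -/
import Mathlib

section
/- Let A and B be abelian categories with enough injective objects and let F : A → B be a left exact functor which restricts to an equivalence between the full subcategory of injective objects of A and the full subcategory of injective objects of B. Then F is an equivalence of abelian categories. -/
open CategoryTheory Limits

universe v₁ v₂ u₁ u₂

section Aux

variable {C : Type u₁} [Category.{v₁} C] [Abelian C]

/-- In an abelian category, if `c : K ⟶ I` is a kernel of `d : I ⟶ I'` and `h : I ⟶ J` is a
morphism into an injective object with `c ≫ h = 0`, then `h` factors through `d`. -/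
lemma stmt4_factor {K I I' J : C} {c : K ⟶ I} {d : I ⟶ I'} {w : c ≫ d = 0}
    (hlim : IsLimit (KernelFork.ofι c w)) [Injective J] (h : I ⟶ J) (hc : c ≫ h = 0) :
    ∃ k : I' ⟶ J, h = d ≫ k := by
  haveI : Mono c := mono_of_isLimit_fork hlim
  let S := ShortComplex.mk c d w
  have hex : S.Exact := S.exact_of_f_is_kernel hlim
  haveI hm : Mono (cokernel.desc c d w) := S.exact_iff_mono_cokernel_desc.1 hex
  refine ⟨Injective.factorThru (cokernel.desc c h hc) (cokernel.desc c d w), ?_⟩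
  conv_lhs => rw [← cokernel.π_desc c h hc,
    ← Injective.comp_factorThru (cokernel.desc c h hc) (cokernel.desc c d w)]
  rw [← Category.assoc, cokernel.π_desc]

variable [EnoughInjectives C]

/-- The first differential of the canonical two-step injective presentation. -/
noncomputable def stmt4_d (X : C) :
    Injective.under X ⟶ Injective.under (cokernel (Injective.ι X)) :=
  cokernel.π (Injective.ι X) ≫ Injective.ι _

lemma stmt4_w (X : C) : Injective.ι X ≫ stmt4_d X = 0 := by
  rw [stmt4_d, ← Category.assoc, cokernel.condition, zero_comp]

/-- `X` is the kernel of `stmt4_d X`. -/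
noncomputable def stmt4_isLimit (X : C) :
    IsLimit (KernelFork.ofι (Injective.ι X) (stmt4_w X)) := by
  have := isKernelCompMono (f := cokernel.π (Injective.ι X))
    (Abelian.monoIsKernelOfCokernel
      (CokernelCofork.ofπ _ (cokernel.condition (Injective.ι X)))
      (cokernelIsCokernel (Injective.ι X)))
    (Injective.ι (cokernel (Injective.ι X))) (h := stmt4_d X) rfl
  exact this

end Aux

/-- A left exact functor between abelian categories with enough injectives which restricts
to an equivalence between the full subcategories of injective objects is an equivalence. -/
theorem stmt4 {A : Type u₁} {B : Type u₂} [Category.{v₁} A] [Category.{v₂} B]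
    [Abelian A] [Abelian B] [EnoughInjectives A] [EnoughInjectives B]
    (F : A ⥤ B) [F.Additive] [PreservesFiniteLimits F]
    (hinj : ∀ X : A, Injective X → Injective (F.obj X))
    (hff : ∀ (X Y : A), Injective X → Injective Y →
      Function.Bijective (fun f : X ⟶ Y => F.map f))
    (hess : ∀ Y : B, Injective Y → ∃ X : A, Injective X ∧ Nonempty (F.obj X ≅ Y)) :
    F.IsEquivalence := by
  -- F kills no nonzero morphism
  have key : ∀ {X Y : A} (f : X ⟶ Y), F.map f = 0 → f = 0 := by
    intro X Y f hf
    have hFi := isLimitForkMapOfIsLimit' F (stmt4_w X) (stmt4_isLimit X)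
    haveI : Injective (F.obj (Injective.under Y)) := hinj _ inferInstance
    have hf0 : Injective.ι X ≫ Injective.factorThru (f ≫ Injective.ι Y) (Injective.ι X)
        = f ≫ Injective.ι Y := Injective.comp_factorThru _ _
    set f0 := Injective.factorThru (f ≫ Injective.ι Y) (Injective.ι X) with hf0def
    have h1 : F.map (Injective.ι X) ≫ F.map f0 = 0 := by
      rw [← F.map_comp, hf0, F.map_comp, hf, zero_comp]
    obtain ⟨k, hk⟩ := stmt4_factor hFi (F.map f0) h1
    obtain ⟨κ, hκ⟩ := (hff _ _ inferInstance inferInstance).2 k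
    replace hκ : F.map κ = k := hκ
    have h2 : f0 = stmt4_d X ≫ κ := by
      apply (hff _ _ inferInstance inferInstance).1
      show F.map f0 = F.map (stmt4_d X ≫ κ)
      rw [F.map_comp, hκ, ← hk]
    have h3 : f ≫ Injective.ι Y = 0 := by
      rw [← hf0, h2, ← Category.assoc, stmt4_w, zero_comp]
    exact zero_of_comp_mono _ h3
  haveI faithful : F.Faithful := ⟨fun {X Y} f g h => by
    rw [← sub_eq_zero]
    apply key
    rw [F.map_sub, h, sub_self]⟩
  haveI full : F.Full := by
    refine ⟨fun {X Y} g => ?_⟩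
    have hFiX := isLimitForkMapOfIsLimit' F (stmt4_w X) (stmt4_isLimit X)
    haveI : Mono (F.map (Injective.ι X)) := mono_of_isLimit_fork hFiX
    have hFiY := isLimitForkMapOfIsLimit' F (stmt4_w Y) (stmt4_isLimit Y)
    haveI : Mono (F.map (Injective.ι Y)) := mono_of_isLimit_fork hFiY
    haveI : Injective (F.obj (Injective.under X)) := hinj _ inferInstance
    haveI : Injective (F.obj (Injective.under Y)) := hinj _ inferInstance
    haveI : Injective (F.obj (Injective.under (cokernel (Injective.ι Y)))) :=
      hinj _ inferInstance
    have hg0 : F.map (Injective.ι X) ≫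
        Injective.factorThru (g ≫ F.map (Injective.ι Y)) (F.map (Injective.ι X))
        = g ≫ F.map (Injective.ι Y) := Injective.comp_factorThru _ _
    set g0 := Injective.factorThru (g ≫ F.map (Injective.ι Y)) (F.map (Injective.ι X))
      with hg0def
    have h1 : F.map (Injective.ι X) ≫ (g0 ≫ F.map (stmt4_d Y)) = 0 := by
      rw [← Category.assoc, hg0, Category.assoc, ← F.map_comp, stmt4_w, F.map_zero,
        comp_zero]
    obtain ⟨g1, hg1⟩ := stmt4_factor hFiX (g0 ≫ F.map (stmt4_d Y)) h1
    obtain ⟨f0, hf0⟩ := (hff _ _ inferInstance inferInstance).2 g0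
    obtain ⟨f1, hf1⟩ := (hff _ _ inferInstance inferInstance).2 g1
    replace hf0 : F.map f0 = g0 := hf0
    replace hf1 : F.map f1 = g1 := hf1
    have comm : f0 ≫ stmt4_d Y = stmt4_d X ≫ f1 := by
      apply (hff _ _ inferInstance inferInstance).1
      show F.map (f0 ≫ stmt4_d Y) = F.map (stmt4_d X ≫ f1)
      rw [F.map_comp, F.map_comp, hf0, hf1, ← hg1]
    have hz : (Injective.ι X ≫ f0) ≫ stmt4_d Y = 0 := by
      rw [Category.assoc, comm, ← Category.assoc, stmt4_w, zero_comp]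
    obtain ⟨f, hf⟩ := KernelFork.IsLimit.lift' (stmt4_isLimit Y) _ hz
    have hf' : f ≫ Injective.ι Y = Injective.ι X ≫ f0 := hf
    refine ⟨f, ?_⟩
    rw [← cancel_mono (F.map (Injective.ι Y)), ← F.map_comp, hf', F.map_comp, hf0]
    exact hg0
  haveI essSurj : F.EssSurj := by
    refine ⟨fun Y => ?_⟩
    obtain ⟨I0, hI0, ⟨α⟩⟩ := hess (Injective.under Y) inferInstance
    obtain ⟨I1, hI1, ⟨β⟩⟩ := hess (Injective.under (cokernel (Injective.ι Y))) inferInstance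
    obtain ⟨d0, hd0⟩ := (hff I0 I1 hI0 hI1).2 (α.hom ≫ stmt4_d Y ≫ β.inv)
    replace hd0 : F.map d0 = α.hom ≫ stmt4_d Y ≫ β.inv := hd0
    refine ⟨kernel d0, ⟨?_⟩⟩
    exact (PreservesKernel.iso F d0) ≪≫ kernelIsoOfEq hd0 ≪≫
      kernelIsoOfEq (show α.hom ≫ stmt4_d Y ≫ β.inv = (α.hom ≫ stmt4_d Y) ≫ β.inv by
        rw [Category.assoc]) ≪≫
      kernelCompMono (α.hom ≫ stmt4_d Y) β.inv ≪≫ kernelIsIsoComp α.hom (stmt4_d Y) ≪≫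
      (kernelIsKernel (stmt4_d Y)).conePointUniqueUpToIso (stmt4_isLimit Y)
  exact ⟨faithful, full, essSurj⟩
end

section
/- Let A and B be abelian categories with enough projective objects and let F : A → B be a right exact functor which restricts to an equivalence between the full subcategories of projective objects of A and of B. Then F is an equivalence of abelian categories. -/
/-!
Every object is the cokernel of a map between projectives, and `F` preserves such cokernels.
If `F g = 0` for `g : P ⟶ Y` with `P` projective, lift `g` to `g₀ : P ⟶ P₀` along a presentation
`P₁ ⟶ P₀ ⟶ Y`; by right exactness `F g₀` factors through `F P₁ ⟶ F P₀`, and since `F` is full and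
faithful on projectives, so does `g₀`, whence `g = 0`. This gives faithfulness; fullness and
essential surjectivity follow by lifting maps between projective presentations and passing to
cokernels.
-/

open CategoryTheory Limits

universe v₁ v₂ u₁ u₂

namespace CategoryTheory

namespace Projective

variable {C : Type u₁} [Category.{v₁} C] [Abelian C] [EnoughProjectives C]

noncomputable abbrev shortPresentation (X : C) : ShortComplex C :=
  ShortComplex.mk (π (kernel (π X)) ≫ kernel.ι (π X)) (π X) (by simp)

lemma shortPresentation_exact (X : C) : (shortPresentation X).Exact :=
  exact_d_f (π X)

end Projective

namespace Functor

open Projective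

variable {A : Type u₁} {B : Type u₂} [Category.{v₁} A] [Category.{v₂} B] [Abelian A] [Abelian B]
  (F : A ⥤ B) [PreservesFiniteColimits F]

lemma eq_zero_of_map_eq_zero_of_projective [EnoughProjectives A]
    (hproj : ∀ X : A, Projective X → Projective (F.obj X))
    (hfaith : ∀ X Y : A, Projective X → Projective Y →
      Function.Injective (F.map (X := X) (Y := Y)))
    (hfull : ∀ X Y : A, Projective X → Projective Y →
      Function.Surjective (F.map (X := X) (Y := Y)))
    {P Y : A} [Projective P] (g : P ⟶ Y) (hg : F.map g = 0) : g = 0 := by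
  let S := shortPresentation Y
  have hFS : (S.map F).Exact :=
    (shortPresentation_exact Y).map_of_epi_of_preservesCokernel F inferInstance inferInstance
  have := hproj P ‹_›
  obtain ⟨g₀, hg₀⟩ : ∃ g₀ : P ⟶ S.X₂, g₀ ≫ S.g = g := ⟨_, factorThru_comp g S.g⟩
  have hzero : F.map g₀ ≫ F.map S.g = 0 := by rw [← F.map_comp, hg₀, hg]
  obtain ⟨m, hm⟩ := hfull P S.X₁ ‹_› inferInstance (hFS.liftFromProjective (F.map g₀) hzero)
  have hmf : m ≫ S.f = g₀ := hfaith P S.X₂ ‹_› inferInstance <| by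
    rw [F.map_comp, hm]
    exact hFS.liftFromProjective_comp (F.map g₀) hzero
  rw [← hg₀, ← hmf, Category.assoc, S.zero, comp_zero]

theorem faithful_of_projectives [F.Additive] [EnoughProjectives A]
    (hproj : ∀ X : A, Projective X → Projective (F.obj X))
    (hfaith : ∀ X Y : A, Projective X → Projective Y →
      Function.Injective (F.map (X := X) (Y := Y)))
    (hfull : ∀ X Y : A, Projective X → Projective Y →
      Function.Surjective (F.map (X := X) (Y := Y))) :
    F.Faithful where
  map_injective {X _} f g h := by
    rw [← sub_eq_zero, ← cancel_epi (π X), comp_zero]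
    exact F.eq_zero_of_map_eq_zero_of_projective hproj hfaith hfull _
      (by rw [F.map_comp, F.map_sub, h, sub_self, comp_zero])

theorem full_of_projectives [F.Faithful] [EnoughProjectives A]
    (hproj : ∀ X : A, Projective X → Projective (F.obj X))
    (hfull : ∀ X Y : A, Projective X → Projective Y →
      Function.Surjective (F.map (X := X) (Y := Y))) :
    F.Full where
  map_surjective {X Y} f := by
    let S := shortPresentation X
    have := hproj S.X₂ inferInstance
    obtain ⟨g₀, hg₀⟩ := hfull S.X₂ (Projective.over Y) inferInstance inferInstance
      (factorThru (F.map S.g ≫ f) (F.map (π Y)))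
    have hfac : F.map (g₀ ≫ π Y) = F.map S.g ≫ f := by
      rw [F.map_comp, hg₀, factorThru_comp]
    have hzero : S.f ≫ g₀ ≫ π Y = 0 := F.map_injective <| by
      rw [F.map_comp, hfac, ← Category.assoc, ← F.map_comp, S.zero, F.map_zero, zero_comp,
        F.map_zero]
    refine ⟨(shortPresentation_exact X).desc _ hzero, ?_⟩
    rw [← cancel_epi (F.map S.g), ← F.map_comp, ShortComplex.Exact.g_desc, hfac]

theorem essSurj_of_projectives [EnoughProjectives B]
    (hfull : ∀ X Y : A, Projective X → Projective Y → Function.Surjective (F.map (X := X) (Y := Y)))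
    (hess : ∀ Y : B, Projective Y → ∃ X : A, Projective X ∧ Nonempty (F.obj X ≅ Y)) :
    F.EssSurj where
  mem_essImage Y := by
    let S := shortPresentation Y
    obtain ⟨P₀, hP₀, ⟨e₀⟩⟩ := hess S.X₂ inferInstance
    obtain ⟨P₁, hP₁, ⟨e₁⟩⟩ := hess S.X₁ inferInstance
    obtain ⟨s, hs⟩ := hfull P₁ P₀ hP₁ hP₀ (e₁.hom ≫ S.f ≫ e₀.inv)
    exact ⟨cokernel s, ⟨PreservesCokernel.iso F s ≪≫ cokernelIsoOfEq hs ≪≫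
      cokernelEpiComp _ _ ≪≫ cokernelCompIsIso _ _ ≪≫
      (colimit.isColimit _).coconePointUniqueUpToIso (shortPresentation_exact Y).gIsCokernel⟩⟩

end Functor

end CategoryTheory

/-- A right exact functor between abelian categories with enough projectives which restricts
to an equivalence between the full subcategories of projective objects is an equivalence. -/
theorem stmt5 {A : Type u₁} {B : Type u₂} [Category.{v₁} A] [Category.{v₂} B]
    [Abelian A] [Abelian B] [EnoughProjectives A] [EnoughProjectives B]
    (F : A ⥤ B) [F.Additive] [PreservesFiniteColimits F]
    (hproj : ∀ X : A, Projective X → Projective (F.obj X))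
    (hff : ∀ (X Y : A), Projective X → Projective Y →
      Function.Bijective (fun f : X ⟶ Y => F.map f))
    (hess : ∀ Y : B, Projective Y → ∃ X : A, Projective X ∧ Nonempty (F.obj X ≅ Y)) :
    F.IsEquivalence := by
  have hfaith X Y hX hY := (hff X Y hX hY).injective
  have hfull X Y hX hY := (hff X Y hX hY).surjective
  have := F.faithful_of_projectives hproj hfaith hfull
  exact { full := F.full_of_projectives hproj hfull
          essSurj := F.essSurj_of_projectives hfull hess }
end

section
/- Let (U, V, W) be a cosuspended TTF triple in a triangulated category T (i.e. (U, V) is a t-structure and (V, W) is a co-t-structure) such that the t-structure (U, V) is nondegenerate. Then V = {}^{⊥>0}𝒞, where 𝒞 = V ∩ W[-1] is the coheart of (V, W); that is, an object X lies in V if and only if Hom_T(X, C[k]) = 0 for all C ∈ 𝒞 and all k > 0. -/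
open CategoryTheory Limits Pretriangulated

universe v u

variable {C : Type u} [Category.{v} C] [Preadditive C] [HasZeroObject C] [HasShift C ℤ]
  [∀ n : ℤ, (shiftFunctor C n).Additive] [Pretriangulated C]

/-- `X` is a direct summand (retract) of `Y`. -/
def IsSummand {C : Type u} [Category.{v} C] (X Y : C) : Prop :=
  ∃ (i : X ⟶ Y) (r : Y ⟶ X), i ≫ r = 𝟙 X

/-- A torsion pair `(𝒰, 𝒱)` in a triangulated category: both classes are closed under
direct summands, all morphisms from `𝒰` to `𝒱` vanish, and every object fits
in a triangle `U ⟶ X ⟶ V ⟶ U⟦1⟧` with `U ∈ 𝒰` and `V ∈ 𝒱`. -/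
structure TorsionPair (𝒰 𝒱 : Set C) : Prop where
  summand_left : ∀ ⦃X Y : C⦄, IsSummand X Y → Y ∈ 𝒰 → X ∈ 𝒰
  summand_right : ∀ ⦃X Y : C⦄, IsSummand X Y → Y ∈ 𝒱 → X ∈ 𝒱
  hom_zero : ∀ ⦃X Y : C⦄, X ∈ 𝒰 → Y ∈ 𝒱 → ∀ f : X ⟶ Y, f = 0
  exists_triangle : ∀ X : C, ∃ (U V : C) (_ : U ∈ 𝒰) (_ : V ∈ 𝒱)
    (f : U ⟶ X) (g : X ⟶ V) (h : V ⟶ U⟦(1 : ℤ)⟧), Triangle.mk f g h ∈ distTriang C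

/-!
One inclusion holds because `𝒱` is closed under negative shifts and `Hom(𝒱, 𝒲) = 0`. For the
other, let `X` be left orthogonal to the positive shifts of the coheart `𝒞` and take its
t-structure triangle `U ⟶ X ⟶ V ⟶ U⟦1⟧`; then `U` is such an object too. Any such `Y ∈ 𝒰` has
`Y⟦-1⟧ ∈ 𝒰`: for `V' ∈ 𝒱`, the co-t-structure triangle `V₁ ⟶ V'⟦1⟧ ⟶ W ⟶ V₁⟦1⟧` has
`W⟦-1⟧ ∈ 𝒞`, so `Hom(Y, V'⟦1⟧) = 0`. Hence all shifts of `U` lie in `𝒰`, nondegeneracy gives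
`U = 0`, and `X ≅ V ∈ 𝒱`.
-/

section

variable {D : Type*} [Category D]

lemma isSummand_of_iso {X Y : D} (e : X ≅ Y) : IsSummand X Y :=
  ⟨e.hom, e.inv, e.hom_inv_id⟩

lemma shift_mul_mem_of_nonneg [HasShift D ℤ] {S : Set D}
    (hS : ∀ ⦃X Y : D⦄, (X ≅ Y) → Y ∈ S → X ∈ S) {d : ℤ} (hd : ∀ X ∈ S, X⟦d⟧ ∈ S)
    {n : ℤ} (hn : 0 ≤ n) {X : D} (hX : X ∈ S) :
    X⟦n * d⟧ ∈ S := by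
  lift n to ℕ using hn
  induction n with
  | zero => exact hS ((shiftFunctorZero' D _ (by simp)).app X) hX
  | succ n ih =>
    exact hS ((shiftFunctorAdd' D (n * d) d _ (by push_cast; ring)).app X) (hd _ ih)

variable [HasZeroMorphisms D]

lemma forall_eq_zero_congr {A B A' B' : D} (e : (A ⟶ B) ≃ (A' ⟶ B')) :
    (∀ f : A ⟶ B, f = 0) ↔ ∀ g : A' ⟶ B', g = 0 := by
  rw [← subsingleton_iff_forall_eq, ← subsingleton_iff_forall_eq, e.subsingleton_congr]

variable [HasShift D ℤ]

lemma forall_shift_neg_hom_eq_zero_iff {X Y : D} (n : ℤ) :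
    (∀ f : X⟦-n⟧ ⟶ Y, f = 0) ↔ ∀ g : X ⟶ Y⟦n⟧, g = 0 :=
  forall_eq_zero_congr ((shiftEquiv' D (-n) n (neg_add_cancel n)).toAdjunction.homEquiv X Y)

lemma forall_shift_neg_hom_shift_eq_zero_iff {X Y : D} {a b c : ℤ} (h : a + b = c) :
    (∀ f : X⟦-b⟧ ⟶ Y⟦a⟧, f = 0) ↔ ∀ g : X ⟶ Y⟦c⟧, g = 0 := by
  rw [forall_shift_neg_hom_eq_zero_iff]
  exact forall_eq_zero_congr (Iso.homCongr (Iso.refl X) ((shiftFunctorAdd' D a b c h).app Y).symm)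

/-- The class `{}^{⊥>0}𝒮`. -/
def leftPerpPos (𝒮 : Set D) : Set D :=
  {X | ∀ Y ∈ 𝒮, ∀ k : ℤ, 0 < k → ∀ f : X ⟶ Y⟦k⟧, f = 0}

lemma leftPerpPos.of_iso {𝒮 : Set D} {X Y : D} (e : X ≅ Y) (hY : Y ∈ leftPerpPos 𝒮) :
    X ∈ leftPerpPos 𝒮 := fun Z hZ k hk =>
  (forall_eq_zero_congr (Iso.homCongr e.symm (Iso.refl _))).1 (hY Z hZ k hk)

lemma shift_neg_mem_leftPerpPos {𝒮 : Set D} {X : D} (hX : X ∈ leftPerpPos 𝒮) {n : ℤ}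
    (hn : 0 ≤ n) : X⟦-n⟧ ∈ leftPerpPos 𝒮 := fun Y hY k hk =>
  (forall_shift_neg_hom_shift_eq_zero_iff rfl).2 (hX Y hY (k + n) (by omega))

end

lemma hom_obj₂_eq_zero {T : Triangle C} (hT : T ∈ distTriang C) {Y : C}
    (h₁ : ∀ g : Y ⟶ T.obj₁, g = 0) (h₃ : ∀ g : Y ⟶ T.obj₃, g = 0) (f : Y ⟶ T.obj₂) : f = 0 := by
  obtain ⟨g, rfl⟩ := T.coyoneda_exact₂ hT f (h₃ _)
  rw [h₁ g, zero_comp]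

lemma obj₂_hom_eq_zero {T : Triangle C} (hT : T ∈ distTriang C) {Z : C}
    (h₁ : ∀ g : T.obj₁ ⟶ Z, g = 0) (h₃ : ∀ g : T.obj₃ ⟶ Z, g = 0) (f : T.obj₂ ⟶ Z) : f = 0 := by
  obtain ⟨g, rfl⟩ := T.yoneda_exact₂ hT f (h₁ _)
  rw [h₃ g, comp_zero]

lemma mem_leftPerpPos_of_distTriang {𝒮 : Set C} {T : Triangle C} (hT : T ∈ distTriang C)
    (h₁ : T.obj₁ ∈ leftPerpPos 𝒮) (h₃ : T.obj₃ ∈ leftPerpPos 𝒮) : T.obj₂ ∈ leftPerpPos 𝒮 :=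
  fun Y hY k hk => obj₂_hom_eq_zero hT (h₁ Y hY k hk) (h₃ Y hY k hk)

/-- The coheart `𝒱 ∩ 𝒲⟦-1⟧` of the co-t-structure `(𝒱, 𝒲)`. -/
def coheart (𝒱 𝒲 : Set C) : Set C :=
  {X | X ∈ 𝒱 ∧ X⟦(1 : ℤ)⟧ ∈ 𝒲}

namespace TorsionPair

variable {𝒜 ℬ : Set C} (h : TorsionPair 𝒜 ℬ)
include h

lemma mem_left_of_iso ⦃X Y : C⦄ (e : X ≅ Y) (hY : Y ∈ 𝒜) : X ∈ 𝒜 :=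
  h.summand_left (isSummand_of_iso e) hY

lemma mem_right_of_iso ⦃X Y : C⦄ (e : X ≅ Y) (hY : Y ∈ ℬ) : X ∈ ℬ :=
  h.summand_right (isSummand_of_iso e) hY

lemma mem_right_of_hom_zero {Y : C} (hY : ∀ A ∈ 𝒜, ∀ f : A ⟶ Y, f = 0) : Y ∈ ℬ := by
  obtain ⟨A, B, hA, hB, f, g, w, hT⟩ := h.exists_triangle Y
  obtain ⟨r, hr⟩ := Triangle.yoneda_exact₂ _ hT (𝟙 Y) ((Category.comp_id f).trans (hY A hA f))
  exact h.summand_right ⟨g, r, hr.symm⟩ hB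

lemma mem_left_of_hom_zero {Y : C} (hY : ∀ B ∈ ℬ, ∀ f : Y ⟶ B, f = 0) : Y ∈ 𝒜 := by
  obtain ⟨A, B, hA, hB, f, g, w, hT⟩ := h.exists_triangle Y
  obtain ⟨i, hi⟩ := Triangle.coyoneda_exact₂ _ hT (𝟙 Y) ((Category.id_comp g).trans (hY B hB g))
  exact h.summand_left ⟨i, f, hi.symm⟩ hA

lemma mem_left_of_distTriang {T : Triangle C} (hT : T ∈ distTriang C) (h₁ : T.obj₁ ∈ 𝒜)
    (h₃ : T.obj₃ ∈ 𝒜) : T.obj₂ ∈ 𝒜 :=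
  h.mem_left_of_hom_zero fun _ hB => obj₂_hom_eq_zero hT (h.hom_zero h₁ hB) (h.hom_zero h₃ hB)

lemma shift_neg_one_mem_left {Y : C} (hY : ∀ B ∈ ℬ, ∀ f : Y ⟶ B⟦(1 : ℤ)⟧, f = 0) :
    Y⟦(-1 : ℤ)⟧ ∈ 𝒜 :=
  h.mem_left_of_hom_zero fun B hB => (forall_shift_neg_hom_eq_zero_iff 1).2 (hY B hB)

end TorsionPair

section TTF

variable {𝒰 𝒱 𝒲 : Set C}

lemma TorsionPair.hom_shift_eq_zero_of_coheart (h : TorsionPair 𝒱 𝒲) {Y : C}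
    (hY𝒱 : ∀ V ∈ 𝒱, ∀ f : Y ⟶ V, f = 0)
    (hY𝒞 : ∀ Cc ∈ coheart 𝒱 𝒲, ∀ f : Y ⟶ Cc⟦(1 : ℤ)⟧, f = 0)
    {V : C} (hV : V ∈ 𝒱) (f : Y ⟶ V⟦(1 : ℤ)⟧) : f = 0 := by
  obtain ⟨V₁, W, hV₁, hW, a, b, c, hT⟩ := h.exists_triangle (V⟦(1 : ℤ)⟧)
  -- the twice inverse-rotated triangle is `V⟦1⟧⟦-1⟧ ⟶ W⟦-1⟧ ⟶ V₁ ⟶ V`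
  have hW𝒱 : W⟦(-1 : ℤ)⟧ ∈ 𝒱 :=
    h.mem_left_of_distTriang (inv_rot_of_distTriang _ (inv_rot_of_distTriang _ hT))
      (h.mem_left_of_iso ((shiftEquiv C (1 : ℤ)).unitIso.app V).symm hV) hV₁
  have hW𝒞 : W⟦(-1 : ℤ)⟧ ∈ coheart 𝒱 𝒲 :=
    ⟨hW𝒱, h.mem_right_of_iso ((shiftEquiv C (1 : ℤ)).counitIso.app W) hW⟩
  exact hom_obj₂_eq_zero hT (hY𝒱 V₁ hV₁) ((forall_eq_zero_congr
    (Iso.homCongr (Iso.refl Y) ((shiftEquiv C (1 : ℤ)).counitIso.app W))).1 (hY𝒞 _ hW𝒞)) f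

lemma subset_leftPerpPos_coheart (h₂ : TorsionPair 𝒱 𝒲) (hco : ∀ X ∈ 𝒱, X⟦(-1 : ℤ)⟧ ∈ 𝒱) :
    𝒱 ⊆ leftPerpPos (coheart 𝒱 𝒲) := by
  intro X hX Cc hCc k hk
  have hXk : X⟦-(k - 1)⟧ ∈ 𝒱 := by
    simpa using shift_mul_mem_of_nonneg h₂.mem_left_of_iso hco (by omega : 0 ≤ k - 1) hX
  exact (forall_shift_neg_hom_shift_eq_zero_iff (by ring)).1 (h₂.hom_zero hXk hCc.2)

lemma shift_neg_one_mem_inter_leftPerpPos (h₁ : TorsionPair 𝒰 𝒱) (h₂ : TorsionPair 𝒱 𝒲)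
    {Y : C} (hY : Y ∈ 𝒰 ∩ leftPerpPos (coheart 𝒱 𝒲)) :
    Y⟦(-1 : ℤ)⟧ ∈ 𝒰 ∩ leftPerpPos (coheart 𝒱 𝒲) :=
  ⟨h₁.shift_neg_one_mem_left fun _ hV => h₂.hom_shift_eq_zero_of_coheart
      (fun _ hV' => h₁.hom_zero hY.1 hV') (fun Cc hCc => hY.2 Cc hCc 1 one_pos) hV,
    shift_neg_mem_leftPerpPos hY.2 zero_le_one⟩

lemma isZero_of_mem_inter_leftPerpPos (h₁ : TorsionPair 𝒰 𝒱) (h₂ : TorsionPair 𝒱 𝒲)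
    (ht : ∀ X ∈ 𝒰, X⟦(1 : ℤ)⟧ ∈ 𝒰) (hnd : ∀ X : C, (∀ n : ℤ, X⟦n⟧ ∈ 𝒰) → IsZero X)
    {Y : C} (hY : Y ∈ 𝒰 ∩ leftPerpPos (coheart 𝒱 𝒲)) : IsZero Y := by
  refine hnd Y fun n => ?_
  rcases le_total 0 n with hn | hn
  · simpa using shift_mul_mem_of_nonneg h₁.mem_left_of_iso ht hn hY.1
  · have hS : ∀ ⦃X Y : C⦄, (X ≅ Y) → Y ∈ 𝒰 ∩ leftPerpPos (coheart 𝒱 𝒲) →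
        X ∈ 𝒰 ∩ leftPerpPos (coheart 𝒱 𝒲) :=
      fun _ _ e hY => ⟨h₁.mem_left_of_iso e hY.1, leftPerpPos.of_iso e hY.2⟩
    simpa using (shift_mul_mem_of_nonneg hS (fun _ => shift_neg_one_mem_inter_leftPerpPos h₁ h₂)
      (by omega : 0 ≤ -n) hY).1

end TTF

theorem stmt11_general (𝒰 𝒱 𝒲 : Set C)
    (h₁ : TorsionPair 𝒰 𝒱) (h₂ : TorsionPair 𝒱 𝒲)
    (ht : ∀ X ∈ 𝒰, X⟦(1 : ℤ)⟧ ∈ 𝒰) (hco : ∀ X ∈ 𝒱, X⟦(-1 : ℤ)⟧ ∈ 𝒱)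
    (hnd₁ : ∀ X : C, (∀ n : ℤ, X⟦n⟧ ∈ 𝒰) → IsZero X) :
    𝒱 = {X : C | ∀ Cc : C, Cc ∈ 𝒱 → Cc⟦(1 : ℤ)⟧ ∈ 𝒲 →
      ∀ k : ℤ, 0 < k → ∀ f : X ⟶ Cc⟦k⟧, f = 0} := by
  have h𝒱 := subset_leftPerpPos_coheart h₂ hco
  refine Set.Subset.antisymm (fun X hX Cc hCc hCc₁ => h𝒱 hX Cc ⟨hCc, hCc₁⟩) fun X hX => ?_
  obtain ⟨U, V, hU, hV, f, g, w, hT⟩ := h₁.exists_triangle X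
  have hU𝒞 : U ∈ leftPerpPos (coheart 𝒱 𝒲) :=
    mem_leftPerpPos_of_distTriang (inv_rot_of_distTriang _ hT)
      (shift_neg_mem_leftPerpPos (h𝒱 hV) zero_le_one) fun Cc hCc => hX Cc hCc.1 hCc.2
  have hU₀ : IsZero U := isZero_of_mem_inter_leftPerpPos h₁ h₂ ht hnd₁ ⟨hU, hU𝒞⟩
  exact h₁.mem_right_of_hom_zero fun _ hA =>
    hom_obj₂_eq_zero hT (fun _ => hU₀.eq_of_tgt _ _) (h₁.hom_zero hA hV)

/-- For a cosuspended TTF triple `(𝒰, 𝒱, 𝒲)` with nondegenerate t-structure `(𝒰, 𝒱)`,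
the class `𝒱` equals `{}^{⊥>0}𝒞` where `𝒞 = 𝒱 ∩ 𝒲⟦-1⟧` is the coheart: an object `X`
lies in `𝒱` iff `Hom(X, Cc⟦k⟧) = 0` for all `Cc ∈ 𝒞` and all `k > 0`. -/
theorem stmt11 (𝒰 𝒱 𝒲 : Set C)
    (h₁ : TorsionPair 𝒰 𝒱) (h₂ : TorsionPair 𝒱 𝒲)
    (ht : ∀ X ∈ 𝒰, X⟦(1 : ℤ)⟧ ∈ 𝒰) (hco : ∀ X ∈ 𝒱, X⟦(-1 : ℤ)⟧ ∈ 𝒱)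
    (hnd₁ : ∀ X : C, (∀ n : ℤ, X⟦n⟧ ∈ 𝒰) → IsZero X)
    (hnd₂ : ∀ X : C, (∀ n : ℤ, X⟦n⟧ ∈ 𝒱) → IsZero X) :
    𝒱 = {X : C | ∀ Cc : C, Cc ∈ 𝒱 → Cc⟦(1 : ℤ)⟧ ∈ 𝒲 →
      ∀ k : ℤ, 0 < k → ∀ f : X ⟶ Cc⟦k⟧, f = 0} :=
  stmt11_general 𝒰 𝒱 𝒲 h₁ h₂ ht hco hnd₁
end

section
/- Conversely, let (U, V, W) be a cosuspended TTF triple in a triangulated category T. If the coheart 𝒞 = V ∩ W[-1] cogenerates T (i.e. Hom_T(X, C[k]) = 0 for all C ∈ 𝒞, k ∈ ℤ implies X = 0), then the t-structure (U, V) is nondegenerate. -/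
open CategoryTheory Limits Pretriangulated

universe v u

variable {C : Type u} [Category.{v} C] [Preadditive C] [HasZeroObject C] [HasShift C ℤ]
  [∀ n : ℤ, (shiftFunctor C n).Additive] [Pretriangulated C]

/-- If the shift of `f : X ⟶ Cc⟦k⟧` by `m` (rewritten as a map `X⟦m⟧ ⟶ Cc⟦n⟧`,
`k + m = n`) vanishes, then `f` vanishes. -/
lemma shift_vanish_aux {X Cc : C} (k m n : ℤ) (h : k + m = n) (f : X ⟶ Cc⟦k⟧)
    (hz : ∀ g : X⟦m⟧ ⟶ Cc⟦n⟧, g = 0) : f = 0 := by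
  apply (shiftFunctor C m).map_injective
  rw [Functor.map_zero]
  have hg := hz ((shiftFunctor C m).map f ≫ ((shiftFunctorAdd' C k m n h).app Cc).inv)
  rw [← cancel_mono ((shiftFunctorAdd' C k m n h).app Cc).inv]
  simpa using hg

/-- Conversely, for a cosuspended TTF triple `(𝒰, 𝒱, 𝒲)`, if the coheart
`𝒞 = 𝒱 ∩ 𝒲⟦-1⟧` cogenerates `T`, then the t-structure `(𝒰, 𝒱)` is nondegenerate. -/
theorem stmt13 (𝒰 𝒱 𝒲 : Set C)
    (h₁ : TorsionPair 𝒰 𝒱) (h₂ : TorsionPair 𝒱 𝒲)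
    (ht : ∀ X ∈ 𝒰, X⟦(1 : ℤ)⟧ ∈ 𝒰) (hco : ∀ X ∈ 𝒱, X⟦(-1 : ℤ)⟧ ∈ 𝒱)
    (hcogen : ∀ X : C,
      (∀ Cc : C, Cc ∈ 𝒱 → Cc⟦(1 : ℤ)⟧ ∈ 𝒲 → ∀ k : ℤ, ∀ f : X ⟶ Cc⟦k⟧, f = 0) →
        IsZero X) :
    (∀ X : C, (∀ n : ℤ, X⟦n⟧ ∈ 𝒰) → IsZero X) ∧
    (∀ X : C, (∀ n : ℤ, X⟦n⟧ ∈ 𝒱) → IsZero X) := by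
  constructor
  · intro X hX
    apply hcogen
    intro Cc hV hW k f
    apply shift_vanish_aux k (-k) 0 (by ring) f
    intro g
    rw [← cancel_mono ((shiftFunctorZero C ℤ).hom.app Cc)]
    rw [zero_comp]
    exact h₁.hom_zero (hX (-k)) hV _
  · intro X hX
    apply hcogen
    intro Cc hV hW k f
    apply shift_vanish_aux k (1 - k) 1 (by ring) f
    intro g
    exact h₂.hom_zero (hX (1 - k)) hW g
end

section
/- Let T be a compactly generated triangulated category and y : T → Mod-T^c the restricted Yoneda functor, yX = Hom_T(-, X) restricted to compact objects. If E is a pure-injective object of T (meaning yE is injective in Mod-T^c, equivalently the natural map Hom_T(X, E) → Hom(yX, yE) is bijective for all X), then for every set I the summation map E^{(I)} → E factors through the canonical map E^{(I)} → E^{I}. -/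
open CategoryTheory Limits Pretriangulated

universe v u

variable {C : Type u} [Category.{v} C] [Preadditive C] [HasZeroObject C] [HasShift C ℤ]
  [∀ n : ℤ, (shiftFunctor C n).Additive] [Pretriangulated C]


/-- An object `K` is compact if `Hom(K, -)` preserves all set-indexed coproducts. -/
def IsCompactObj (K : C) : Prop :=
  ∀ I : Type v, Nonempty (PreservesColimitsOfShape (Discrete I)
    (preadditiveCoyoneda.obj (Opposite.op K)))

/-- The restricted Yoneda functor `y : T ⥤ Mod-T^c`, sending `X` to the restriction of
`Hom_T(-, X)` to the subcategory `Tc` of compact objects. -/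
def restrictedYoneda (Tc : Set C) :
    C ⥤ ((ObjectProperty.FullSubcategory (Tc ·))ᵒᵖ ⥤ AddCommGrpCat.{v}) :=
  preadditiveYoneda ⋙ (Functor.whiskeringLeft _ _ _).obj (ObjectProperty.ι (Tc ·)).op

open scoped Classical

/-! Complete the comparison map `c : E^(I) ⟶ E^I` to a distinguished triangle
`X ⟶ E^(I) ⟶ E^I ⟶ X⟦1⟧` with first map `a`. Every coproduct projection `E^(I) ⟶ E` factors
through `c`, and `a ≫ c = 0`, so all components of `a` vanish; since `Hom(K, -)` turns the
coproduct into a direct sum for compact `K`, the map `a` is phantom. A phantom map into a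
pure-injective object is zero, so the summation map `E^(I) ⟶ E` kills `a` and hence factors
through `c`. -/

open Opposite
open scoped DirectSum

lemma eq_zero_of_forall_comp_sigmaπ_eq_zero {C : Type u} [Category.{v} C] [Preadditive C]
    {I : Type v} [DecidableEq I] {f : I → C} [HasCoproduct f] {K : C}
    [PreservesColimitsOfShape (Discrete I) (preadditiveCoyoneda.obj (op K))]
    (g : K ⟶ ∐ f) (hg : ∀ j, g ≫ Sigma.π f j = 0) : g = 0 := by
  -- `Hom(K, -)` preserves the coproduct, so `hc.desc toSum` identifies `K ⟶ ∐ f` with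
  -- `⨁ j, K ⟶ f j`; `ofSum` is its inverse.
  let F := preadditiveCoyoneda.obj (op K)
  let hc := isColimitOfPreserves F (colimit.isColimit (Discrete.functor f))
  let toSum : Cocone (Discrete.functor f ⋙ F) :=
    { pt := AddCommGrpCat.of (⨁ j, K ⟶ f j)
      ι := Discrete.natTrans fun j => AddCommGrpCat.ofHom (DirectSum.of (fun j => K ⟶ f j) j.as) }
  let ofSum : (⨁ j, K ⟶ f j) →+ (K ⟶ ∐ f) :=
    DirectSum.toAddMonoid fun j => Preadditive.rightComp K (Sigma.ι f j)
  have ofSum_comp_π (x : ⨁ j, K ⟶ f j) (j : I) : ofSum x ≫ Sigma.π f j = x j := by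
    induction x using DirectSum.induction_on with
    | zero => simp
    | of i y =>
      by_cases h : i = j
      · subst h
        simp [ofSum, Preadditive.rightComp]
      · simp [ofSum, Preadditive.rightComp, Sigma.ι_π_of_ne _ h,
          DirectSum.of_eq_of_ne _ _ _ (Ne.symm h)]
    | add x y hx hy => simp [Preadditive.add_comp, hx, hy]
  have ofSum_desc (x : K ⟶ ∐ f) : ofSum (hc.desc toSum x) = x := by
    have : hc.desc toSum ≫ AddCommGrpCat.ofHom ofSum = 𝟙 _ := hc.hom_ext fun ⟨j⟩ => by
      rw [← Category.assoc, hc.fac]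
      ext y
      exact DirectSum.toAddMonoid_of (fun j => Preadditive.rightComp K (Sigma.ι f j)) j y
    exact ConcreteCategory.congr_hom this x
  have desc_eq_zero : hc.desc toSum g = 0 := DFinsupp.ext fun j => by
    rw [← ofSum_comp_π, ofSum_desc, hg]
    rfl
  rw [← ofSum_desc g, desc_eq_zero, map_zero]

def IsPhantom {C : Type u} [Category.{v} C] [HasZeroMorphisms C] (Tc : Set C) {X Y : C}
    (a : X ⟶ Y) : Prop :=
  ∀ K ∈ Tc, ∀ x : K ⟶ X, x ≫ a = 0

namespace IsPhantom

variable {C : Type u} [Category.{v} C] [Preadditive C] {Tc : Set C} {X Y : C} {a : X ⟶ Y}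

lemma comp (ha : IsPhantom Tc a) {Z : C} (b : Y ⟶ Z) : IsPhantom Tc (a ≫ b) :=
  fun K hK x => by rw [← Category.assoc, ha K hK x, zero_comp]

lemma eq_zero (hY : Function.Injective fun φ : X ⟶ Y => (restrictedYoneda Tc).map φ)
    (ha : IsPhantom Tc a) : a = 0 := by
  apply hY
  ext K x
  exact (ha K.unop.obj K.unop.property x).trans comp_zero.symm

end IsPhantom

lemma isPhantom_of_comp_eq_zero {C : Type u} [Category.{v} C] [Preadditive C] {Tc : Set C}
    (hcompact : ∀ K ∈ Tc, IsCompactObj K) {I : Type v} [DecidableEq I] {f : I → C}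
    [HasCoproduct f] {X P : C} {a : X ⟶ ∐ f} {c : ∐ f ⟶ P} (hac : a ≫ c = 0)
    (hc : ∀ j, ∃ p : P ⟶ f j, c ≫ p = Sigma.π f j) : IsPhantom Tc a := by
  intro K hK x
  have := (hcompact K hK I).some
  refine eq_zero_of_forall_comp_sigmaπ_eq_zero _ fun j => ?_
  obtain ⟨p, hp⟩ := hc j
  rw [Category.assoc, ← hp, reassoc_of% hac, zero_comp, comp_zero]

theorem stmt16_general [HasCoproducts.{v} C] [HasProducts.{v} C]
    (Tc : Set C)
    (hcompact : ∀ K ∈ Tc, IsCompactObj K)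
    (E : C)
    (hE : ∀ X : C, Function.Bijective fun φ : X ⟶ E => (restrictedYoneda Tc).map φ)
    (I : Type v) :
    ∃ g : (∏ᶜ fun _ : I => E) ⟶ E,
      (Sigma.desc fun i : I => Pi.lift fun j : I => if i = j then 𝟙 E else 0) ≫ g =
        Sigma.desc fun _ : I => 𝟙 E := by
  set c := Sigma.desc fun i : I => Pi.lift fun j : I => if i = j then 𝟙 E else 0
  have c_comp_π (j : I) : c ≫ Pi.π _ j = Sigma.π _ j := by
    ext i
    by_cases h : i = j
    · subst h
      simp [c]
    · simp [c, h, Sigma.ι_π_of_ne _ h]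
  obtain ⟨X, a, _, hT⟩ := distinguished_cocone_triangle₁ c
  have ha : IsPhantom Tc a :=
    isPhantom_of_comp_eq_zero hcompact (comp_distTriang_mor_zero₁₂ _ hT) fun j =>
      ⟨Pi.π _ j, c_comp_π j⟩
  obtain ⟨g, hg⟩ :=
    Triangle.yoneda_exact₂ _ hT (Sigma.desc fun _ => 𝟙 E) ((ha.comp _).eq_zero (hE X).injective)
  exact ⟨g, hg.symm⟩

/-- In a compactly generated triangulated category, if `E` is pure-injective (the restricted
Yoneda functor is bijective on morphisms into `E`), then for every set `I` the summation map
`E^{(I)} ⟶ E` factors through the canonical map `E^{(I)} ⟶ E^I`. -/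
theorem stmt16 [HasCoproducts.{v} C] [HasProducts.{v} C]
    (Tc : Set C) (hsmall : EssentiallySmall.{v} (ObjectProperty.FullSubcategory (Tc ·)))
    (hcompact : ∀ K ∈ Tc, IsCompactObj K)
    (hgen : ∀ Y : C, (∀ K ∈ Tc, ∀ f : K ⟶ Y, f = 0) → IsZero Y)
    (E : C)
    (hE : ∀ X : C, Function.Bijective fun φ : X ⟶ E => (restrictedYoneda Tc).map φ)
    (I : Type v) :
    ∃ g : (∏ᶜ fun _ : I => E) ⟶ E,
      (Sigma.desc fun i : I => Pi.lift fun j : I => if i = j then 𝟙 E else 0) ≫ g =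
        Sigma.desc fun _ : I => 𝟙 E :=
  stmt16_general Tc hcompact E hE I
end

section
/- Let T be a triangulated category and C a cosilting object, with associated t-structure ({}^{⊥≤0}C, {}^{⊥>0}C) and heart H_C. Then H⁰_C(C) is an injective cogenerator of H_C: it is injective in the abelian category H_C, and every nonzero object N of H_C admits a nonzero morphism N → H⁰_C(C); moreover Hom_{H_C}(N, H⁰_C(C)) ≅ Hom_T(N, C) for every N in the heart. -/
open CategoryTheory Limits Pretriangulated

universe v u

variable {C : Type u} [Category.{v} C] [Preadditive C] [HasZeroObject C] [HasShift C ℤ]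
  [∀ n : ℤ, (shiftFunctor C n).Additive] [Pretriangulated C]

/-- Functorial truncation data for a torsion pair `(𝒰, 𝒱)`: truncation functors `u` and `v`,
right resp. left adjoint to the inclusions, with counit `ι`, unit `π` and connecting maps
forming the truncation triangles `u(X) ⟶ X ⟶ v(X) ⟶ u(X)⟦1⟧`. -/
structure TruncationFunctors (𝒰 𝒱 : Set C) where
  u : C ⥤ C
  v : C ⥤ C
  ι : u ⟶ 𝟭 C
  π : 𝟭 C ⟶ v
  δ : ∀ X : C, v.obj X ⟶ (u.obj X)⟦(1 : ℤ)⟧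
  mem_u : ∀ X : C, u.obj X ∈ 𝒰
  mem_v : ∀ X : C, v.obj X ∈ 𝒱
  triangle : ∀ X : C, Triangle.mk (ι.app X) (π.app X) (δ X) ∈ distTriang C
  adj_u : ∀ (A X : C), A ∈ 𝒰 → Function.Bijective (fun g : A ⟶ u.obj X => g ≫ ι.app X)
  adj_v : ∀ (X B : C), B ∈ 𝒱 → Function.Bijective (fun g : v.obj X ⟶ B => π.app X ≫ g)

/-- The cohomological functor `H⁰(X) = v(u(X⟦1⟧)⟦-1⟧)` associated to a t-structure with
truncation functors `d`. -/
def H0 {𝒰 𝒱 : Set C} (d : TruncationFunctors 𝒰 𝒱) : C ⥤ C :=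
  shiftFunctor C (1 : ℤ) ⋙ d.u ⋙ shiftFunctor C (-1 : ℤ) ⋙ d.v


/-- `{}^{⊥>0}M`: objects `Y` with `Hom(Y, M[i]) = 0` for all `i > 0`. -/
def leftPerpGT (M : C) : Set C := {Y : C | ∀ i : ℤ, 0 < i → ∀ f : Y ⟶ M⟦i⟧, f = 0}

/-- `{}^{⊥≤0}M`: objects `Y` with `Hom(Y, M[i]) = 0` for all `i ≤ 0`. -/
def leftPerpLE (M : C) : Set C := {Y : C | ∀ i : ℤ, i ≤ 0 → ∀ f : Y ⟶ M⟦i⟧, f = 0}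

/-- `M` is cosilting if `({}^{⊥≤0}M, {}^{⊥>0}M)` is a t-structure and `M ∈ {}^{⊥>0}M`. -/
def IsCosilting (M : C) : Prop :=
  TorsionPair (leftPerpLE M) (leftPerpGT M) ∧
    (∀ X ∈ leftPerpLE M, X⟦(1 : ℤ)⟧ ∈ leftPerpLE M) ∧ M ∈ leftPerpGT M

/-- The heart `𝒰⟦-1⟧ ∩ 𝒱` of the t-structure `(𝒰, 𝒱)`. -/
def heart (𝒰 𝒱 : Set C) : Set C := {X : C | X⟦(1 : ℤ)⟧ ∈ 𝒰 ∧ X ∈ 𝒱}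

/-!
Put `A = u(M⟦1⟧)⟦-1⟧`, so that `H⁰(M) = v(A)`. For `N` in the heart we have `N⟦1⟧ ∈ 𝒰`, and `u` is
right adjoint to the inclusion of `𝒰`, so composing with the shifted truncation `A ⟶ M` identifies
`Hom(N, A)` with `Hom(N, M)`. Being an extension of `M` by `v(M⟦1⟧)⟦-2⟧`, the object `A` lies in `𝒱`,
so `π : A ⟶ v(A)` is invertible and we get a map `β : H⁰(M) ⟶ M` inducing
`Hom(N, H⁰(M)) ≅ Hom(N, M)`. Injectivity of `H⁰(M)` is then inherited from `M`: for a short exact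
sequence `T₁ ⟶ T₂ ⟶ T₃` of the heart, `Hom(T₂, M) ⟶ Hom(T₁, M)` is onto because
`Hom(T₃⟦-1⟧, M) = 0`. Cogeneration holds because a heart object without nonzero maps to `M` lies
in `𝒰 ∩ 𝒱 = 0`.
-/

section Shift

variable {D : Type*} [Category D] [Preadditive D] [HasShift D ℤ]

lemma hom_shift_neg_one_eq_zero {X Y : D} (h : ∀ g : X ⟶ Y⟦(1 : ℤ)⟧, g = 0)
    (f : X⟦(-1 : ℤ)⟧ ⟶ Y) : f = 0 :=
  ((shiftEquiv' D (-1 : ℤ) 1 (by norm_num)).toAdjunction.homEquiv X Y).injective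
    ((h _).trans (h _).symm)

lemma hom_shift_shift_one_eq_zero {X Y : D} (i : ℤ) (h : ∀ g : X ⟶ Y⟦i + 1⟧, g = 0)
    (f : X ⟶ Y⟦i⟧⟦(1 : ℤ)⟧) : f = 0 := by
  rw [← cancel_mono ((shiftFunctorAdd D i 1).inv.app Y), h (f ≫ _), zero_comp]

variable {M : D}

lemma mem_leftPerpGT_of_iso {X Y : D} (e : X ≅ Y) (hY : Y ∈ leftPerpGT M) :
    X ∈ leftPerpGT M := fun i hi f => by
  rw [← cancel_epi e.inv, hY i hi (_ ≫ f), comp_zero]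

lemma shift_neg_one_mem_leftPerpGT {X : D} (hX : X ∈ leftPerpGT M) :
    X⟦(-1 : ℤ)⟧ ∈ leftPerpGT M := fun i hi =>
  hom_shift_neg_one_eq_zero (hom_shift_shift_one_eq_zero i (hX (i + 1) (by omega)))

lemma hom_eq_zero_of_shift_mem_leftPerpLE {N : D} (hN : N⟦(1 : ℤ)⟧ ∈ leftPerpLE M) {i : ℤ}
    (hi : i < 0) (f : N ⟶ M⟦i⟧) : f = 0 :=
  (shiftFunctor D (1 : ℤ)).map_eq_zero_iff.1
    (hom_shift_shift_one_eq_zero i (hN (i + 1) (by omega)) _)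

lemma mem_leftPerpLE_of_mem_heart {N : D} (hN : N ∈ heart (leftPerpLE M) (leftPerpGT M))
    (h : ∀ f : N ⟶ M, f = 0) : N ∈ leftPerpLE M := by
  intro i hi f
  obtain hi | rfl := hi.lt_or_eq
  · exact hom_eq_zero_of_shift_mem_leftPerpLE hN.1 hi f
  · rw [← cancel_mono ((shiftFunctorZero D ℤ).hom.app M), h (f ≫ _), zero_comp]

end Shift

lemma obj₂_mem_leftPerpGT_of_distTriang {M : C} {T : Triangle C} (hT : T ∈ distTriang C)
    (h₁ : T.obj₁ ∈ leftPerpGT M) (h₃ : T.obj₃ ∈ leftPerpGT M) : T.obj₂ ∈ leftPerpGT M := by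
  intro i hi f
  obtain ⟨g, rfl⟩ := Triangle.yoneda_exact₂ T hT f (h₁ i hi _)
  rw [h₃ i hi g, comp_zero]

lemma TorsionPair.isZero_of_mem {𝒰 𝒱 : Set C} (h : TorsionPair 𝒰 𝒱) {X : C} (hU : X ∈ 𝒰)
    (hV : X ∈ 𝒱) : IsZero X :=
  (IsZero.iff_id_eq_zero X).2 (h.hom_zero hU hV _)

namespace TruncationFunctors

variable {𝒰 𝒱 : Set C} (d : TruncationFunctors 𝒰 𝒱)

lemma isIso_π_app {X : C} (hX : X ∈ 𝒱) : IsIso (d.π.app X) := by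
  obtain ⟨r, hr : d.π.app X ≫ r = 𝟙 X⟩ := (d.adj_v X X hX).2 (𝟙 X)
  refine ⟨r, hr, (d.adj_v X _ (d.mem_v X)).1 ?_⟩
  simp only [reassoc_of% hr, Category.comp_id]

def shiftedι (X : C) : (d.u.obj (X⟦(1 : ℤ)⟧))⟦(-1 : ℤ)⟧ ⟶ X :=
  (d.ι.app (X⟦(1 : ℤ)⟧))⟦(-1 : ℤ)⟧' ≫ (shiftFunctorCompIsoId C (1 : ℤ) (-1) (by norm_num)).hom.app X

lemma comp_shiftedι_bijective {N : C} (hN : N⟦(1 : ℤ)⟧ ∈ 𝒰) (X : C) :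
    Function.Bijective (fun g : N ⟶ (d.u.obj (X⟦(1 : ℤ)⟧))⟦(-1 : ℤ)⟧ => g ≫ d.shiftedι X) := by
  have hι := ((shiftEquiv C (1 : ℤ)).toAdjunction.comp_map_bijective_iff
    (d.ι.app (X⟦(1 : ℤ)⟧)) N).2 (d.adj_u _ _ hN)
  have he := (isIso_iff_yoneda_map_bijective
    ((shiftFunctorCompIsoId C (1 : ℤ) (-1) (by norm_num)).hom.app X)).1 inferInstance N
  simp only [shiftedι, ← Category.assoc]
  exact he.comp hι

end TruncationFunctors

lemma TruncationFunctors.shift_u_obj_shift_mem_leftPerpGT {𝒰 : Set C} {M : C}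
    (d : TruncationFunctors 𝒰 (leftPerpGT M)) (hM : M ∈ leftPerpGT M) :
    (d.u.obj (M⟦(1 : ℤ)⟧))⟦(-1 : ℤ)⟧ ∈ leftPerpGT M := by
  have hT := Triangle.shift_distinguished _ (d.triangle (M⟦(1 : ℤ)⟧)) (-1)
  refine obj₂_mem_leftPerpGT_of_distTriang (inv_rot_of_distTriang _ hT) ?_ ?_
  · exact shift_neg_one_mem_leftPerpGT (shift_neg_one_mem_leftPerpGT (d.mem_v _))
  · exact mem_leftPerpGT_of_iso ((shiftFunctorCompIsoId C (1 : ℤ) (-1) (by norm_num)).app M) hM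

lemma exists_mor₁_comp_eq_of_comp_injective_of_comp_surjective {I M : C} (β : I ⟶ M)
    {T : Triangle C} (hT : T ∈ distTriang C)
    (h₁ : Function.Injective (fun ψ : T.obj₁ ⟶ I => ψ ≫ β))
    (h₂ : Function.Surjective (fun ψ : T.obj₂ ⟶ I => ψ ≫ β))
    (h₃ : ∀ f : T.obj₃⟦(-1 : ℤ)⟧ ⟶ M, f = 0) (φ : T.obj₁ ⟶ I) :
    ∃ ψ : T.obj₂ ⟶ I, T.mor₁ ≫ ψ = φ := by
  obtain ⟨g, hg⟩ := Triangle.yoneda_exact₂ _ (inv_rot_of_distTriang _ hT) (φ ≫ β) (h₃ _)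
  obtain ⟨ψ, rfl⟩ := h₂ g
  exact ⟨ψ, h₁ ((Category.assoc _ _ _).trans hg.symm)⟩

/-- For a cosilting object `M` with associated heart `H_M`, `H⁰_M(M)` is an injective
cogenerator of `H_M`: it is injective with respect to the short exact sequences of the heart
(triangles with all terms in the heart), every nonzero object of the heart admits a nonzero
morphism to it, and `Hom_{H_M}(N, H⁰_M(M)) ≅ Hom_T(N, M)` for every `N` in the heart. -/
theorem stmt19 (M : C) (hM : IsCosilting M)
    (d : TruncationFunctors (leftPerpLE M) (leftPerpGT M)) :
    (∀ (T : Triangle C), (T ∈ distTriang C) → T.obj₁ ∈ heart (leftPerpLE M) (leftPerpGT M) →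
      T.obj₂ ∈ heart (leftPerpLE M) (leftPerpGT M) →
      T.obj₃ ∈ heart (leftPerpLE M) (leftPerpGT M) →
      ∀ φ : T.obj₁ ⟶ (H0 d).obj M, ∃ ψ : T.obj₂ ⟶ (H0 d).obj M, T.mor₁ ≫ ψ = φ) ∧
    (∀ N ∈ heart (leftPerpLE M) (leftPerpGT M),
      ¬ IsZero N → ∃ φ : N ⟶ (H0 d).obj M, φ ≠ 0) ∧
    (∀ N ∈ heart (leftPerpLE M) (leftPerpGT M),
      Nonempty ((N ⟶ (H0 d).obj M) ≃+ (N ⟶ M))) := by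
  obtain ⟨hUV, -, hMV⟩ := hM
  set A := (d.u.obj (M⟦(1 : ℤ)⟧))⟦(-1 : ℤ)⟧
  have : IsIso (d.π.app A) := d.isIso_π_app (d.shift_u_obj_shift_mem_leftPerpGT hMV)
  let β : d.v.obj A ⟶ M := inv (d.π.app A) ≫ d.shiftedι M
  have hβ : ∀ N ∈ heart (leftPerpLE M) (leftPerpGT M),
      Function.Bijective (fun ψ : N ⟶ d.v.obj A => ψ ≫ β) := fun N hN => by
    simpa only [β, Category.assoc, Function.comp_def] using (d.comp_shiftedι_bijective hN.1 M).comp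
      ((isIso_iff_yoneda_map_bijective (inv (d.π.app A))).1 inferInstance N)
  refine ⟨fun T hT h₁ h₂ h₃ φ => ?_, fun N hN hN0 => ?_, fun N hN => ?_⟩
  · exact exists_mor₁_comp_eq_of_comp_injective_of_comp_surjective β hT (hβ _ h₁).1
      (hβ _ h₂).2 (hom_shift_neg_one_eq_zero (h₃.2 1 one_pos)) φ
  · by_contra! h
    refine hN0 (hUV.isZero_of_mem (mem_leftPerpLE_of_mem_heart hN fun f => ?_) hN.2)
    obtain ⟨ψ, rfl⟩ := (hβ N hN).2 f
    exact (congrArg (· ≫ β) (h ψ)).trans zero_comp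
  · exact ⟨AddEquiv.ofBijective (Preadditive.rightComp N β) (hβ N hN)⟩
end
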